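/- Let P(λ) be an m×n matrix polynomial of grade k with m ≤ n and nrank P(λ) = r, and let L(λ) ∈ 𝕃₂(P) be a g-linearization of P(λ). Then: (1) the left minimal indices of P(λ) are ε₁ ≤ ε₂ ≤ … ≤ ε_{m−r} if and only if the left minimal indices of L(λ) are (k−1)+ε₁ ≤ (k−1)+ε₂ ≤ … ≤ (k−1)+ε_{m−r}; and (2) every left minimal basis of L(λ) is of the form {Λ_k(λ)⊗y₁(λ), …, Λ_k(λ)⊗y_{m−r}(λ)} where {y₁(λ), …, y_{m−r}(λ)} is a left minimal basis of P(λ). -/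
import Mathlib


noncomputable section

open Polynomial Matrix

namespace GLin

variable {F : Type*} [RCLike F]

/-! ### Matrix polynomials and pencils -/

/-- The matrix polynomial `P(λ) = ∑_{i=0}^k λ^i A_i` determined by its
coefficient matrices `A_0, …, A_k` (grade `k`). -/
def matPoly {k m n : ℕ} (A : Fin (k + 1) → Matrix (Fin m) (Fin n) F) :
    Matrix (Fin m) (Fin n) F[X] :=
  Matrix.of fun r c => ∑ i : Fin (k + 1), Polynomial.C (A i r c) * Polynomial.X ^ (i : ℕ)

/-- The matrix pencil `L(λ) = λ X + Y`. -/
def pencil {ρ γ : Type*} (Xc Yc : Matrix ρ γ F) : Matrix ρ γ F[X] :=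
  Matrix.of fun i j => Polynomial.C (Xc i j) * Polynomial.X + Polynomial.C (Yc i j)

/-- `Λ_k(λ) ⊗ I_n` where `Λ_k(λ) = (λ^{k-1}, …, λ, 1)ᵀ`. -/
def Lam (F : Type*) [RCLike F] (k n : ℕ) : Matrix (Fin k × Fin n) (Fin n) F[X] :=
  Matrix.of fun p c => if p.2 = c then Polynomial.X ^ (k - 1 - (p.1 : ℕ)) else 0

/-- `Λ_k(λ)ᵀ ⊗ I_m`. -/
def LamRow (F : Type*) [RCLike F] (k m : ℕ) : Matrix (Fin m) (Fin k × Fin m) F[X] :=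
  Matrix.of fun r p => if r = p.2 then Polynomial.X ^ (k - 1 - (p.1 : ℕ)) else 0

/-- `v ⊗ P(λ)`. -/
def vkron {k m n : ℕ} (v : Fin k → F) (P : Matrix (Fin m) (Fin n) F[X]) :
    Matrix (Fin k × Fin m) (Fin n) F[X] :=
  Matrix.of fun p c => Polynomial.C (v p.1) * P p.2 c

/-- `wᵀ ⊗ P(λ)`. -/
def wkron {k m n : ℕ} (w : Fin k → F) (P : Matrix (Fin m) (Fin n) F[X]) :
    Matrix (Fin m) (Fin k × Fin n) F[X] :=
  Matrix.of fun r q => Polynomial.C (w q.1) * P r q.2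

/-- The defining identity of `𝕃₁(P)`: `L(λ)(Λ_k(λ) ⊗ I_n) = v ⊗ P(λ)`. -/
def RightAnsatz {k m n : ℕ} (P : Matrix (Fin m) (Fin n) F[X])
    (L : Matrix (Fin k × Fin m) (Fin k × Fin n) F[X]) (v : Fin k → F) : Prop :=
  L * Lam F k n = vkron v P

/-- The defining identity of `𝕃₂(P)`: `(Λ_k(λ)ᵀ ⊗ I_m) L(λ) = wᵀ ⊗ P(λ)`. -/
def LeftAnsatz {k m n : ℕ} (P : Matrix (Fin m) (Fin n) F[X])
    (L : Matrix (Fin k × Fin m) (Fin k × Fin n) F[X]) (w : Fin k → F) : Prop :=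
  LamRow F k m * L = wkron w P

/-- The vector `α e₁ ∈ F^k`. -/
def e1 {k : ℕ} (α : F) : Fin k → F := fun i => if (i : ℕ) = 0 then α else 0

/-- `M ⊗ I_m`. -/
def kronId {k m : ℕ} (M : Matrix (Fin k) (Fin k) F) :
    Matrix (Fin k × Fin m) (Fin k × Fin m) F :=
  Matrix.of fun p q => if p.2 = q.2 then M p.1 q.1 else 0

/-! ### (strong) g-linearizations -/

/-- `diag(P(λ), I_{k-1} ⊗ I_{m,n})`. -/
def glinTarget {k m n : ℕ} (P : Matrix (Fin m) (Fin n) F[X]) :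
    Matrix (Fin k × Fin m) (Fin k × Fin n) F[X] :=
  Matrix.of fun p q =>
    if p.1 = q.1 then
      (if (p.1 : ℕ) = 0 then P p.2 q.2 else if (p.2 : ℕ) = (q.2 : ℕ) then 1 else 0)
    else 0

/-- A `km × kn` pencil (or matrix polynomial) `L` is a g-linearization of the `m × n`
matrix polynomial `P` of grade `k` if `E(λ) L(λ) G(λ) = diag(P(λ), I_{k-1} ⊗ I_{m,n})`
for unimodular `E`, `G`. -/
def IsGLin {k m n : ℕ} (P : Matrix (Fin m) (Fin n) F[X])
    (L : Matrix (Fin k × Fin m) (Fin k × Fin n) F[X]) : Prop :=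
  ∃ (E : Matrix (Fin k × Fin m) (Fin k × Fin m) F[X])
    (G : Matrix (Fin k × Fin n) (Fin k × Fin n) F[X]),
      IsUnit E.det ∧ IsUnit G.det ∧ E * L * G = glinTarget P

/-- grade-`N` reversal `rev_N P(λ) = λ^N P(1/λ)`, entrywise. -/
def revMat {ρ γ : Type*} (N : ℕ) (P : Matrix ρ γ F[X]) : Matrix ρ γ F[X] :=
  P.map fun p => Polynomial.reflect N p

/-- Strong g-linearization of the grade-`k` matrix polynomial with coefficients `A`. -/
def IsStrongGLin {k m n : ℕ} (A : Fin (k + 1) → Matrix (Fin m) (Fin n) F)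
    (L : Matrix (Fin k × Fin m) (Fin k × Fin n) F[X]) : Prop :=
  IsGLin (matPoly A) L ∧ IsGLin (revMat k (matPoly A)) (revMat 1 L)

/-! ### linearizations (rectangular, of size `(m+s) × (n+s)`) -/

/-- A matrix polynomial `L` (indexed by arbitrary finite types of cardinalities
`m + s` and `n + s`) is a linearization of `P` if, after identifying the index types
with `Fin m ⊕ Fin s` and `Fin n ⊕ Fin s`, one has `E(λ) L(λ) G(λ) = diag(P(λ), I_s)`
for unimodular `E`, `G`. -/
def IsLin {m n : ℕ} (s : ℕ) (P : Matrix (Fin m) (Fin n) F[X])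
    {ρ γ : Type*} [Fintype ρ] [DecidableEq ρ] [Fintype γ] [DecidableEq γ]
    (L : Matrix ρ γ F[X]) : Prop :=
  ∃ (er : ρ ≃ (Fin m ⊕ Fin s)) (ec : γ ≃ (Fin n ⊕ Fin s))
    (E : Matrix (Fin m ⊕ Fin s) (Fin m ⊕ Fin s) F[X])
    (G : Matrix (Fin n ⊕ Fin s) (Fin n ⊕ Fin s) F[X]),
      IsUnit E.det ∧ IsUnit G.det ∧
        E * Matrix.reindex er ec L * G = Matrix.fromBlocks P 0 0 1

/-- Strong linearization of the grade-`k` matrix polynomial with coefficients `A`. -/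
def IsStrongLin {k m n : ℕ} (s : ℕ) (A : Fin (k + 1) → Matrix (Fin m) (Fin n) F)
    {ρ γ : Type*} [Fintype ρ] [DecidableEq ρ] [Fintype γ] [DecidableEq γ]
    (L : Matrix ρ γ F[X]) : Prop :=
  IsLin s (matPoly A) L ∧ IsLin s (revMat k (matPoly A)) (revMat 1 L)

/-! ### shifted sums -/

/-- Column shifted sum `X ⊞→ Y`. -/
def colShiftSum {k m n : ℕ} (Xc Yc : Matrix (Fin k × Fin m) (Fin k × Fin n) F) :
    Matrix (Fin k × Fin m) (Fin (k + 1) × Fin n) F :=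
  Matrix.of fun p q =>
    (if h : (q.1 : ℕ) < k then Xc p (⟨(q.1 : ℕ), h⟩, q.2) else 0) +
    (if h : 0 < (q.1 : ℕ) then
        Yc p (⟨(q.1 : ℕ) - 1, by have := q.1.isLt; omega⟩, q.2)
      else 0)

/-- Row shifted sum `X ⊞↓ Y`. -/
def rowShiftSum {k m n : ℕ} (Xc Yc : Matrix (Fin k × Fin m) (Fin k × Fin n) F) :
    Matrix (Fin (k + 1) × Fin m) (Fin k × Fin n) F :=
  Matrix.of fun p q =>
    (if h : (p.1 : ℕ) < k then Xc (⟨(p.1 : ℕ), h⟩, p.2) q else 0) +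
    (if h : 0 < (p.1 : ℕ) then
        Yc (⟨(p.1 : ℕ) - 1, by have := p.1.isLt; omega⟩, p.2) q
      else 0)

/-! ### the parametrization of `𝕃₁(P)` and `𝕃₂(P)` -/

/-- `X = [v ⊗ A_k ∣ -W]`. -/
def L1X {k m n : ℕ} (A : Fin (k + 1) → Matrix (Fin m) (Fin n) F) (v : Fin k → F)
    (W : Matrix (Fin k × Fin m) (Fin (k - 1) × Fin n) F) :
    Matrix (Fin k × Fin m) (Fin k × Fin n) F :=
  Matrix.of fun p q =>
    if h : (q.1 : ℕ) = 0 then v p.1 * A (Fin.last k) p.2 q.2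
    else -W p (⟨(q.1 : ℕ) - 1, by have := q.1.isLt; omega⟩, q.2)

/-- `Y = [W + v ⊗ [A_{k-1} ⋯ A_1] ∣ v ⊗ A_0]`. -/
def L1Y {k m n : ℕ} (A : Fin (k + 1) → Matrix (Fin m) (Fin n) F) (v : Fin k → F)
    (W : Matrix (Fin k × Fin m) (Fin (k - 1) × Fin n) F) :
    Matrix (Fin k × Fin m) (Fin k × Fin n) F :=
  Matrix.of fun p q =>
    if h : (q.1 : ℕ) < k - 1 then
      W p (⟨(q.1 : ℕ), h⟩, q.2) + v p.1 * A (⟨k - 1 - (q.1 : ℕ), by omega⟩) p.2 q.2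
    else v p.1 * A 0 p.2 q.2

/-- `X = [wᵀ ⊗ A_k ; -Ŵ]`. -/
def L2X {k m n : ℕ} (A : Fin (k + 1) → Matrix (Fin m) (Fin n) F) (w : Fin k → F)
    (W : Matrix (Fin (k - 1) × Fin m) (Fin k × Fin n) F) :
    Matrix (Fin k × Fin m) (Fin k × Fin n) F :=
  Matrix.of fun p q =>
    if h : (p.1 : ℕ) = 0 then w q.1 * A (Fin.last k) p.2 q.2
    else -W (⟨(p.1 : ℕ) - 1, by have := p.1.isLt; omega⟩, p.2) q

/-- `Y = [Ŵ + wᵀ ⊗ [A_{k-1}ᵀ ⋯ A_1ᵀ]ᵀ ; wᵀ ⊗ A_0]`. -/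
def L2Y {k m n : ℕ} (A : Fin (k + 1) → Matrix (Fin m) (Fin n) F) (w : Fin k → F)
    (W : Matrix (Fin (k - 1) × Fin m) (Fin k × Fin n) F) :
    Matrix (Fin k × Fin m) (Fin k × Fin n) F :=
  Matrix.of fun p q =>
    if h : (p.1 : ℕ) < k - 1 then
      W (⟨(p.1 : ℕ), h⟩, p.2) q + w q.1 * A (⟨k - 1 - (p.1 : ℕ), by omega⟩) p.2 q.2
    else w q.1 * A 0 p.2 q.2

/-! ### block structure and `Z`-matrices -/

/-- Assemble a `km × kn` matrix from blocks with row split `m + (k-1)m` and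
column split `n + (k-1)n`. -/
def blk {k m n : ℕ} (TL : Matrix (Fin m) (Fin n) F)
    (TR : Matrix (Fin m) (Fin (k - 1) × Fin n) F)
    (BL : Matrix (Fin (k - 1) × Fin m) (Fin n) F)
    (BR : Matrix (Fin (k - 1) × Fin m) (Fin (k - 1) × Fin n) F) :
    Matrix (Fin k × Fin m) (Fin k × Fin n) F :=
  Matrix.of fun p q =>
    if hp : (p.1 : ℕ) = 0 then
      if hq : (q.1 : ℕ) = 0 then TL p.2 q.2
      else TR p.2 (⟨(q.1 : ℕ) - 1, by have := q.1.isLt; omega⟩, q.2)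
    else
      if hq : (q.1 : ℕ) = 0 then
        BL (⟨(p.1 : ℕ) - 1, by have := p.1.isLt; omega⟩, p.2) q.2
      else
        BR (⟨(p.1 : ℕ) - 1, by have := p.1.isLt; omega⟩, p.2)
          (⟨(q.1 : ℕ) - 1, by have := q.1.isLt; omega⟩, q.2)

/-- Assemble `[[Y₁₁, T],[Z, 0]]`, row split `m + (k-1)m`, column split `(k-1)n + n`. -/
def blkY1 {k m n : ℕ} (Y11 : Matrix (Fin m) (Fin (k - 1) × Fin n) F)
    (T : Matrix (Fin m) (Fin n) F)
    (Z : Matrix (Fin (k - 1) × Fin m) (Fin (k - 1) × Fin n) F) :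
    Matrix (Fin k × Fin m) (Fin k × Fin n) F :=
  Matrix.of fun p q =>
    if hp : (p.1 : ℕ) = 0 then
      if hq : (q.1 : ℕ) < k - 1 then Y11 p.2 (⟨(q.1 : ℕ), hq⟩, q.2) else T p.2 q.2
    else
      if hq : (q.1 : ℕ) < k - 1 then
        Z (⟨(p.1 : ℕ) - 1, by have := p.1.isLt; omega⟩, p.2) (⟨(q.1 : ℕ), hq⟩, q.2)
      else 0

/-- Assemble `[[Y₁₁, Z],[T, 0]]`, row split `(k-1)m + m`, column split `n + (k-1)n`. -/
def blkY2 {k m n : ℕ} (Y11 : Matrix (Fin (k - 1) × Fin m) (Fin n) F)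
    (Z : Matrix (Fin (k - 1) × Fin m) (Fin (k - 1) × Fin n) F)
    (T : Matrix (Fin m) (Fin n) F) :
    Matrix (Fin k × Fin m) (Fin k × Fin n) F :=
  Matrix.of fun p q =>
    if hp : (p.1 : ℕ) < k - 1 then
      if hq : (q.1 : ℕ) = 0 then Y11 (⟨(p.1 : ℕ), hp⟩, p.2) q.2
      else Z (⟨(p.1 : ℕ), hp⟩, p.2) (⟨(q.1 : ℕ) - 1, by have := q.1.isLt; omega⟩, q.2)
    else
      if hq : (q.1 : ℕ) = 0 then T p.2 q.2 else 0

/-- The `Z`-matrix of `L = λX + Y ∈ 𝕃₁(P)` with respect to `M`: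
the lower-left `(k-1)m × (k-1)n` block of `(M ⊗ I_m) Y`. -/
def Zmat1 {k m n : ℕ} (M : Matrix (Fin k) (Fin k) F)
    (Yc : Matrix (Fin k × Fin m) (Fin k × Fin n) F) :
    Matrix (Fin (k - 1) × Fin m) (Fin (k - 1) × Fin n) F :=
  Matrix.of fun p q =>
    (kronId M * Yc : Matrix (Fin k × Fin m) (Fin k × Fin n) F)
      (⟨(p.1 : ℕ) + 1, by have := p.1.isLt; omega⟩, p.2)
      (⟨(q.1 : ℕ), by have := q.1.isLt; omega⟩, q.2)

/-- The `Z`-matrix of `L = λX + Y ∈ 𝕃₂(P)` with respect to `M̂`: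
the upper-right `(k-1)m × (k-1)n` block of `Y (M̂ᵀ ⊗ I_n)`. -/
def Zmat2 {k m n : ℕ} (M : Matrix (Fin k) (Fin k) F)
    (Yc : Matrix (Fin k × Fin m) (Fin k × Fin n) F) :
    Matrix (Fin (k - 1) × Fin m) (Fin (k - 1) × Fin n) F :=
  Matrix.of fun p q =>
    (Yc * kronId Mᵀ : Matrix (Fin k × Fin m) (Fin k × Fin n) F)
      (⟨(p.1 : ℕ), by have := p.1.isLt; omega⟩, p.2)
      (⟨(q.1 : ℕ) + 1, by have := q.1.isLt; omega⟩, q.2)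

/-- `L = λX + Y ∈ 𝕃₁(P)` with right ansatz vector `v` has full `Z`-rank. -/
def FullZrank1 {k m n : ℕ} (Yc : Matrix (Fin k × Fin m) (Fin k × Fin n) F)
    (v : Fin k → F) : Prop :=
  ∃ (M : Matrix (Fin k) (Fin k) F) (α : F),
    IsUnit M ∧ α ≠ 0 ∧ M.mulVec v = e1 α ∧ (Zmat1 M Yc).rank = (k - 1) * n

/-- `L = λX + Y ∈ 𝕃₂(P)` with left ansatz vector `w` has full `Z`-rank. -/
def FullZrank2 {k m n : ℕ} (Yc : Matrix (Fin k × Fin m) (Fin k × Fin n) F)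
    (w : Fin k → F) : Prop :=
  ∃ (M : Matrix (Fin k) (Fin k) F) (α : F),
    IsUnit M ∧ α ≠ 0 ∧ M.mulVec w = e1 α ∧ (Zmat2 M Yc).rank = (k - 1) * m

/-! ### null spaces, minimal bases and minimal indices over `F(λ)` -/

/-- A matrix polynomial viewed as a matrix over the field of rational functions. -/
def matRF {ρ γ : Type*} (P : Matrix ρ γ F[X]) : Matrix ρ γ (RatFunc F) :=
  P.map (algebraMap F[X] (RatFunc F))

/-- The right null space `N_r(P) = {x(λ) : P(λ) x(λ) ≡ 0}` over `F(λ)`. -/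
def Nr {ρ γ : Type*} [Fintype γ] (P : Matrix ρ γ F[X]) :
    Submodule (RatFunc F) (γ → RatFunc F) :=
  LinearMap.ker (Matrix.mulVecLin (matRF P))

/-- The left null space `N_l(P) = {y(λ) : y(λ)ᵀ P(λ) ≡ 0}` over `F(λ)`. -/
def Nl {ρ γ : Type*} [Fintype ρ] (P : Matrix ρ γ F[X]) :
    Submodule (RatFunc F) (ρ → RatFunc F) :=
  Nr Pᵀ

/-- The normal rank of a matrix polynomial: its rank over `F(λ)`. -/
def nrank {ρ γ : Type*} [Fintype γ] (P : Matrix ρ γ F[X]) : ℕ :=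
  (matRF P).rank

/-- The rational vector determined by a vector polynomial. -/
def polyVec {γ : Type*} (x : γ → F[X]) : γ → RatFunc F :=
  fun i => algebraMap F[X] (RatFunc F) (x i)

/-- A rational vector is a vector polynomial if all its entries are polynomials. -/
def IsVecPoly {γ : Type*} (x : γ → RatFunc F) : Prop :=
  ∃ p : γ → F[X], x = polyVec p

/-- The degree of a vector polynomial: the greatest degree of its components. -/
def polyVecDeg {γ : Type*} [Fintype γ] (x : γ → F[X]) : ℕ :=
  Finset.univ.sup fun i => (x i).natDegree

/-- A polynomial basis of the subspace `V` of `F(λ)^γ`. -/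
def IsPolyBasis {γ ι : Type*} [Fintype γ]
    (V : Submodule (RatFunc F) (γ → RatFunc F)) (b : ι → γ → F[X]) : Prop :=
  LinearIndependent (RatFunc F) (fun i => polyVec (b i)) ∧
    Submodule.span (RatFunc F) (Set.range fun i => polyVec (b i)) = V

/-- A minimal basis of `V`: a polynomial basis of least order (sum of degrees). -/
def IsMinimalBasis {γ ι : Type*} [Fintype γ] [Fintype ι]
    (V : Submodule (RatFunc F) (γ → RatFunc F)) (b : ι → γ → F[X]) : Prop :=
  IsPolyBasis V b ∧
    ∀ (d : ℕ) (b' : Fin d → γ → F[X]), IsPolyBasis V b' →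
      ∑ i, polyVecDeg (b i) ≤ ∑ i, polyVecDeg (b' i)

/-- `ε` is the list of minimal indices of `V`: some minimal basis of `V` has
`ε` as its list of degrees. -/
def HasMinIndices {γ : Type*} [Fintype γ]
    (V : Submodule (RatFunc F) (γ → RatFunc F)) {d : ℕ} (ε : Fin d → ℕ) : Prop :=
  ∃ b : Fin d → γ → F[X], IsMinimalBasis V b ∧ ∀ i, polyVecDeg (b i) = ε i

/-- `Λ_k(λ) ⊗ x(λ)`. -/
def lamTensor {n : ℕ} (k : ℕ) (x : Fin n → RatFunc F) : Fin k × Fin n → RatFunc F :=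
  fun p => algebraMap F[X] (RatFunc F) (Polynomial.X ^ (k - 1 - (p.1 : ℕ))) * x p.2

/-- The matrix `vᵀ ⊗ I_m` over `F(λ)`; `𝓛_v(y) = (vproj v).mulVec y`. -/
def vproj {k m : ℕ} (v : Fin k → F) : Matrix (Fin m) (Fin k × Fin m) (RatFunc F) :=
  Matrix.of fun r p =>
    if r = p.2 then algebraMap F[X] (RatFunc F) (Polynomial.C (v p.1)) else 0

/-- `(vᵀ ⊗ I_m) y` at the level of vector polynomials. -/
def LvPoly {k m : ℕ} (v : Fin k → F) (y : Fin k × Fin m → F[X]) : Fin m → F[X] :=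
  fun r => ∑ i : Fin k, Polynomial.C (v i) * y (i, r)

/-- The rational subspace spanned by the rows of a matrix polynomial. -/
def rowSpan {ρ γ : Type*} [Fintype γ] (B : Matrix ρ γ F[X]) :
    Submodule (RatFunc F) (γ → RatFunc F) :=
  Submodule.span (RatFunc F) (Set.range fun i => polyVec (B i))

/-- A matrix polynomial is a minimal basis if its rows form a minimal basis of the
rational subspace they span. -/
def IsMinimalBasisMat {ρ γ : Type*} [Fintype ρ] [Fintype γ] (B : Matrix ρ γ F[X]) : Prop :=
  IsMinimalBasis (rowSpan B) (fun i => B i)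

/-- Dual minimal bases: `B ∈ F[λ]^{n₁×n}`, `C ∈ F[λ]^{n₂×n}` minimal bases with
`n₁ + n₂ = n` and `B Cᵀ = 0`. -/
def DualMinBases {ρ ρ' γ : Type*} [Fintype ρ] [Fintype ρ'] [Fintype γ]
    (B : Matrix ρ γ F[X]) (Cm : Matrix ρ' γ F[X]) : Prop :=
  IsMinimalBasisMat B ∧ IsMinimalBasisMat Cm ∧
    Fintype.card ρ + Fintype.card ρ' = Fintype.card γ ∧ B * Cmᵀ = 0

/-! ### norms, singular values -/

/-- Square of the Frobenius norm of a constant matrix. -/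
def frobSq {ρ γ : Type*} [Fintype ρ] [Fintype γ] (Ac : Matrix ρ γ F) : ℝ :=
  ∑ i, ∑ j, ‖Ac i j‖ ^ 2

/-- `‖λX + Y‖_F = sqrt(‖X‖_F² + ‖Y‖_F²)`. -/
def penFrob {ρ γ : Type*} [Fintype ρ] [Fintype γ] (Xc Yc : Matrix ρ γ F) : ℝ :=
  Real.sqrt (frobSq Xc + frobSq Yc)

/-- `‖P‖_F = sqrt(∑ ‖A_i‖_F²)` for `P(λ) = ∑ λ^i A_i`. -/
def famFrob {k m n : ℕ} (A : Fin (k + 1) → Matrix (Fin m) (Fin n) F) : ℝ :=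
  Real.sqrt (∑ i, frobSq (A i))

/-- `‖P‖_F` for a matrix polynomial of grade `g`. -/
def mpolyFrob {ρ γ : Type*} [Fintype ρ] [Fintype γ] (g : ℕ) (P : Matrix ρ γ F[X]) : ℝ :=
  Real.sqrt (∑ i, ∑ j, ∑ d ∈ Finset.range (g + 1), ‖(P i j).coeff d‖ ^ 2)

/-- Square of the Euclidean norm of a vector. -/
def vecNormSq {ι : Type*} [Fintype ι] (x : ι → F) : ℝ := ∑ i, ‖x i‖ ^ 2

/-- The smallest singular value of a matrix. -/
def sigmaMin {ρ γ : Type*} [Fintype ρ] [Fintype γ] (Ac : Matrix ρ γ F) : ℝ :=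
  if Fintype.card γ ≤ Fintype.card ρ then
    sInf {r : ℝ | ∃ x : γ → F, vecNormSq x = 1 ∧ r = Real.sqrt (vecNormSq (Ac.mulVec x))}
  else
    sInf {r : ℝ | ∃ y : ρ → F, vecNormSq y = 1 ∧ r = Real.sqrt (vecNormSq (Acᴴ.mulVec y))}

/-- The spectral norm (2-norm) of a matrix. -/
def norm2 {ρ γ : Type*} [Fintype ρ] [Fintype γ] (Ac : Matrix ρ γ F) : ℝ :=
  sSup {r : ℝ | ∃ x : γ → F, vecNormSq x = 1 ∧ r = Real.sqrt (vecNormSq (Ac.mulVec x))}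

/-- `κ₂(D) = ‖D‖₂ ‖D⁻¹‖₂`. -/
def cond2 {ρ : Type*} [Fintype ρ] [DecidableEq ρ] (Dc : Matrix ρ ρ F) : ℝ :=
  norm2 Dc * norm2 Dc⁻¹

/-! ### pencils used in the backward error analysis -/

/-- `B(λ) = λ [0 ∣ -R̃] + [R̃ ∣ 0]`, i.e. `R̃ (H_{k-1}(λ) ⊗ I_n)` up to sign conventions. -/
def Bpencil {k n : ℕ} (R : Matrix (Fin (k - 1) × Fin n) (Fin (k - 1) × Fin n) F) :
    Matrix (Fin (k - 1) × Fin n) (Fin k × Fin n) F[X] :=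
  Matrix.of fun p q =>
    (if h : (q.1 : ℕ) < k - 1 then Polynomial.C (R p (⟨(q.1 : ℕ), h⟩, q.2)) else 0) +
    (if h : 0 < (q.1 : ℕ) then
        Polynomial.X *
          Polynomial.C (-R p (⟨(q.1 : ℕ) - 1, by have := q.1.isLt; omega⟩, q.2))
      else 0)

/-- The coefficient of `λ` in `H_{k-1}(λ) ⊗ I_n`. -/
def Hlam (F : Type*) [RCLike F] (k n : ℕ) :
    Matrix (Fin (k - 1) × Fin n) (Fin k × Fin n) F :=
  Matrix.of fun p q => if p.2 = q.2 ∧ (q.1 : ℕ) = (p.1 : ℕ) + 1 then 1 else 0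

/-- The constant coefficient of `H_{k-1}(λ) ⊗ I_n`. -/
def Hconst (F : Type*) [RCLike F] (k n : ℕ) :
    Matrix (Fin (k - 1) × Fin n) (Fin k × Fin n) F :=
  Matrix.of fun p q => if p.2 = q.2 ∧ (q.1 : ℕ) = (p.1 : ℕ) then -1 else 0

/-- The convolution matrix `C_j(λ Xc + Yc)` of a pencil, with `j+1` block columns. -/
def convPencil {ρ γ : Type*} (Xc Yc : Matrix ρ γ F) (j : ℕ) :
    Matrix (Fin (j + 2) × ρ) (Fin (j + 1) × γ) F :=
  Matrix.of fun r c =>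
    if (r.1 : ℕ) = (c.1 : ℕ) then Xc r.2 c.2
    else if (r.1 : ℕ) = (c.1 : ℕ) + 1 then Yc r.2 c.2 else 0

/-- λ-coefficient of the trimmed pencil `L̂_t(λ)`:
`[[α A_k, X₁₂],[0, -R̃]]` with row split `m + (k-1)n`. -/
def LtX {k m n : ℕ} (α : F) (Ak : Matrix (Fin m) (Fin n) F)
    (X12 : Matrix (Fin m) (Fin (k - 1) × Fin n) F)
    (R : Matrix (Fin (k - 1) × Fin n) (Fin (k - 1) × Fin n) F) :
    Matrix (Fin m ⊕ (Fin (k - 1) × Fin n)) (Fin k × Fin n) F :=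
  Matrix.of fun s q =>
    Sum.elim
      (fun r => if h : (q.1 : ℕ) = 0 then α * Ak r q.2
        else X12 r (⟨(q.1 : ℕ) - 1, by have := q.1.isLt; omega⟩, q.2))
      (fun p => if h : (q.1 : ℕ) = 0 then 0
        else -R p (⟨(q.1 : ℕ) - 1, by have := q.1.isLt; omega⟩, q.2)) s

/-- Constant coefficient of the trimmed pencil `L̂_t(λ)`:
`[[Y₁₁, α A₀],[R̃, 0]]` with row split `m + (k-1)n`. -/
def LtY {k m n : ℕ} (α : F) (A0 : Matrix (Fin m) (Fin n) F)
    (Y11 : Matrix (Fin m) (Fin (k - 1) × Fin n) F)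
    (R : Matrix (Fin (k - 1) × Fin n) (Fin (k - 1) × Fin n) F) :
    Matrix (Fin m ⊕ (Fin (k - 1) × Fin n)) (Fin k × Fin n) F :=
  Matrix.of fun s q =>
    Sum.elim
      (fun r => if h : (q.1 : ℕ) < k - 1 then Y11 r (⟨(q.1 : ℕ), h⟩, q.2)
        else α * A0 r q.2)
      (fun p => if h : (q.1 : ℕ) < k - 1 then R p (⟨(q.1 : ℕ), h⟩, q.2) else 0) s

/-! ### trimming -/

/-- The rows `[0 ∣ Q₂*] (M ⊗ I_m)`. -/
def bottomRows {k m n c : ℕ} (M : Matrix (Fin k) (Fin k) F)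
    (Q : Matrix (Fin (k - 1) × Fin m) ((Fin (k - 1) × Fin n) ⊕ Fin c) F) :
    Matrix (Fin c) (Fin k × Fin m) F :=
  (Matrix.of fun (j : Fin c) (p : Fin k × Fin m) =>
      if h : (p.1 : ℕ) = 0 then 0
      else star (Q (⟨(p.1 : ℕ) - 1, by have := p.1.isLt; omega⟩, p.2) (Sum.inr j)))
    * kronId M

/-- The square matrix `[D ; [0 ∣ Q₂*](M ⊗ I_m)]` whose invertibility makes `D` admissible. -/
def trimAux {k m n c : ℕ} (M : Matrix (Fin k) (Fin k) F)
    (Q : Matrix (Fin (k - 1) × Fin m) ((Fin (k - 1) × Fin n) ⊕ Fin c) F)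
    (D : Matrix (Fin m ⊕ (Fin (k - 1) × Fin n)) (Fin k × Fin m) F) :
    Matrix ((Fin m ⊕ (Fin (k - 1) × Fin n)) ⊕ Fin c) (Fin k × Fin m) F :=
  Matrix.of (Sum.elim (fun i j => D i j) (fun i j => bottomRows M Q i j))

/-- The columns `(M̂ᵀ ⊗ I_n) [0 ; Q₂]`. -/
def rightCols {k m n c : ℕ} (M : Matrix (Fin k) (Fin k) F)
    (Q : Matrix (Fin (k - 1) × Fin n) ((Fin (k - 1) × Fin m) ⊕ Fin c) F) :
    Matrix (Fin k × Fin n) (Fin c) F :=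
  kronId Mᵀ *
    (Matrix.of fun (q : Fin k × Fin n) (j : Fin c) =>
      if h : (q.1 : ℕ) = 0 then 0
      else Q (⟨(q.1 : ℕ) - 1, by have := q.1.isLt; omega⟩, q.2) (Sum.inr j))

/-- The square matrix `[D̂ ∣ (M̂ᵀ ⊗ I_n)[0 ; Q₂]]` whose invertibility makes `D̂` admissible. -/
def trimAux2 {k m n c : ℕ} (M : Matrix (Fin k) (Fin k) F)
    (Q : Matrix (Fin (k - 1) × Fin n) ((Fin (k - 1) × Fin m) ⊕ Fin c) F)
    (D : Matrix (Fin k × Fin n) (Fin n ⊕ (Fin (k - 1) × Fin m)) F) :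
    Matrix (Fin k × Fin n) ((Fin n ⊕ (Fin (k - 1) × Fin m)) ⊕ Fin c) F :=
  Matrix.of fun q s => Sum.elim (fun t => D q t) (fun j => rightCols M Q q j) s
/-! ### Auxiliary development for Statement 8 -/

section Aux8

set_option maxHeartbeats 1000000
set_option synthInstance.maxHeartbeats 400000

variable {F : Type*} [RCLike F]

private lemma aMap_inj : Function.Injective (algebraMap F[X] (RatFunc F)) :=
  RatFunc.algebraMap_injective F

lemma polyVec_injective {γ : Type*} :
    Function.Injective (polyVec (F := F) (γ := γ)) := by
  intro x y h
  funext i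
  exact aMap_inj (congrFun h i)

lemma polyVec_zero {γ : Type*} : polyVec (F := F) (γ := γ) 0 = 0 := by
  funext i; simp [polyVec]

/-- The linear map `y ↦ Λ_k(λ) ⊗ y` over `F(λ)`. -/
def Tmap (F : Type*) [RCLike F] (k m : ℕ) :
    (Fin m → RatFunc F) →ₗ[RatFunc F] (Fin k × Fin m → RatFunc F) where
  toFun y := fun p => algebraMap F[X] (RatFunc F) (X ^ (k - 1 - (p.1 : ℕ))) * y p.2
  map_add' y z := by funext p; simp [mul_add]
  map_smul' c y := by
    funext p
    simp only [RingHom.id_apply, Pi.smul_apply, smul_eq_mul]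
    ring

lemma Tmap_apply {k m : ℕ} (y : Fin m → RatFunc F) (p : Fin k × Fin m) :
    Tmap F k m y p = algebraMap F[X] (RatFunc F) (X ^ (k - 1 - (p.1 : ℕ))) * y p.2 := rfl

lemma Tmap_injective {k m : ℕ} (hk : 0 < k) : Function.Injective (Tmap F k m) := by
  intro y z h
  funext j
  have h2 := congrFun h (⟨k - 1, by omega⟩, j)
  simpa [Tmap_apply, Nat.sub_self] using h2

lemma Tmap_polyVec {k m : ℕ} (y : Fin m → F[X]) :
    Tmap F k m (polyVec y) =
      polyVec (fun p : Fin k × Fin m => X ^ (k - 1 - (p.1 : ℕ)) * y p.2) := by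
  funext p
  simp [Tmap_apply, polyVec, _root_.map_mul]

lemma mem_Nl_iff {ρ γ : Type*} [Fintype ρ] (P : Matrix ρ γ F[X]) (y : ρ → RatFunc F) :
    y ∈ Nl P ↔ ∀ q, ∑ p, algebraMap F[X] (RatFunc F) (P p q) * y p = 0 := by
  simp [Nl, Nr, LinearMap.mem_ker, funext_iff, Matrix.mulVecLin_apply, Matrix.mulVec,
    dotProduct, matRF, Matrix.map_apply, Matrix.transpose_apply]

lemma mem_Nl_iff' {ρ γ : Type*} [Fintype ρ] (P : Matrix ρ γ F[X]) (y : ρ → RatFunc F) :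
    y ∈ Nl P ↔ (matRF P)ᵀ.mulVec y = 0 := by
  rw [Nl, Nr, LinearMap.mem_ker, Matrix.mulVecLin_apply]
  rw [show matRF Pᵀ = (matRF P)ᵀ from Matrix.transpose_map]

/-- The image of `N_l(P)` under `y ↦ Λ ⊗ y` lies in `N_l(L)` for any `L ∈ 𝕃₂(P)`. -/
lemma map_Tmap_le_Nl {k m n : ℕ} (P : Matrix (Fin m) (Fin n) F[X])
    (L : Matrix (Fin k × Fin m) (Fin k × Fin n) F[X]) (w : Fin k → F)
    (hW : LeftAnsatz P L w) :
    Submodule.map (Tmap F k m) (Nl P) ≤ Nl L := by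
  intro z hz
  obtain ⟨y, hy, rfl⟩ := Submodule.mem_map.mp hz
  rw [mem_Nl_iff] at hy
  refine (mem_Nl_iff _ _).mpr fun q => ?_
  have key : ∀ j : Fin m,
      (∑ i : Fin k, X ^ (k - 1 - (i : ℕ)) * L (i, j) q) = C (w q.1) * P j q.2 := by
    intro j
    have h := congrFun (congrFun hW j) q
    simpa [Matrix.mul_apply, LamRow, wkron, Fintype.sum_prod_type, ite_mul, zero_mul,
      Finset.sum_ite_eq, Finset.sum_ite_eq'] using h
  calc ∑ p : Fin k × Fin m, algebraMap F[X] (RatFunc F) (L p q) * Tmap F k m y p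
      = ∑ j : Fin m, ∑ i : Fin k,
          algebraMap F[X] (RatFunc F) (L (i, j) q) *
            (algebraMap F[X] (RatFunc F) (X ^ (k - 1 - (i : ℕ))) * y j) := by
        rw [Fintype.sum_prod_type, Finset.sum_comm]
        rfl
    _ = ∑ j : Fin m,
          algebraMap F[X] (RatFunc F) (∑ i : Fin k, X ^ (k - 1 - (i : ℕ)) * L (i, j) q) * y j := by
        refine Finset.sum_congr rfl fun j _ => ?_
        rw [_root_.map_sum, Finset.sum_mul]
        refine Finset.sum_congr rfl fun i _ => ?_
        rw [_root_.map_mul]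
        ring
    _ = algebraMap F[X] (RatFunc F) (C (w q.1)) *
          ∑ j : Fin m, algebraMap F[X] (RatFunc F) (P j q.2) * y j := by
        rw [Finset.mul_sum]
        refine Finset.sum_congr rfl fun j _ => ?_
        rw [key j, _root_.map_mul]
        ring
    _ = 0 := by rw [hy q.2, mul_zero]

/-- The linear map `y ↦ e₁ ⊗ y` over `F(λ)`. -/
def T0map (F : Type*) [RCLike F] (k m : ℕ) :
    (Fin m → RatFunc F) →ₗ[RatFunc F] (Fin k × Fin m → RatFunc F) where
  toFun y := fun p => if (p.1 : ℕ) = 0 then y p.2 else 0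
  map_add' y z := by funext p; by_cases h : (p.1 : ℕ) = 0 <;> simp [h]
  map_smul' c y := by
    funext p
    simp only [RingHom.id_apply, Pi.smul_apply, smul_eq_mul]
    by_cases h : (p.1 : ℕ) = 0 <;> simp [h]

lemma T0map_injective {k m : ℕ} (hk : 0 < k) : Function.Injective (T0map F k m) := by
  intro y z h
  funext j
  have h2 := congrFun h (⟨0, hk⟩, j)
  simpa [T0map] using h2

lemma Nl_glinTarget {k m n : ℕ} (hk : 0 < k) (hmn : m ≤ n)
    (P : Matrix (Fin m) (Fin n) F[X]) :
    Nl (glinTarget (k := k) P) = Submodule.map (T0map F k m) (Nl P) := by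
  have i0 : Fin k := ⟨0, hk⟩
  apply le_antisymm
  · intro z hz
    rw [mem_Nl_iff] at hz
    -- first: for i ≠ 0, z (i, j) = 0
    have hzero : ∀ (i : Fin k), (i : ℕ) ≠ 0 → ∀ j : Fin m, z (i, j) = 0 := by
      intro i hi j
      have h := hz (i, Fin.castLE hmn j)
      rw [Fintype.sum_prod_type] at h
      rw [Finset.sum_eq_single i (fun i' _ hi' => ?_) (by simp)] at h
      · rw [Finset.sum_eq_single j (fun j' _ hj' => ?_) (by simp)] at h
        · simpa [glinTarget, hi, Fin.val_injective.eq_iff] using h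
        · have hcond : ¬ ((j' : ℕ) = (j : ℕ)) := fun hc => hj' (Fin.ext hc)
          simp [glinTarget, hi, hcond]
      · simp [glinTarget, hi']
    refine Submodule.mem_map.mpr ⟨fun j => z (⟨0, hk⟩, j), (mem_Nl_iff _ _).mpr fun d => ?_, ?_⟩
    · have h := hz (⟨0, hk⟩, d)
      rw [Fintype.sum_prod_type] at h
      rw [Finset.sum_eq_single (⟨0, hk⟩ : Fin k) (fun i' _ hi' => ?_) (by simp)] at h
      · simpa [glinTarget] using h
      · have hi'0 : (i' : ℕ) ≠ 0 := fun hc => hi' (Fin.ext hc)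
        refine Finset.sum_eq_zero fun j _ => ?_
        rw [hzero i' hi'0 j, mul_zero]
    · funext p
      rcases p with ⟨i, j⟩
      by_cases hi : (i : ℕ) = 0
      · have : i = ⟨0, hk⟩ := Fin.ext hi
        simp [T0map, this, hi]
      · simp [T0map, hi, hzero i hi j]
  · intro z hz
    obtain ⟨y, hy, rfl⟩ := Submodule.mem_map.mp hz
    rw [mem_Nl_iff] at hy
    refine (mem_Nl_iff _ _).mpr ?_
    rintro ⟨c, d⟩
    rw [Fintype.sum_prod_type]
    by_cases hc : (c : ℕ) = 0
    · have hc' : c = ⟨0, hk⟩ := Fin.ext hc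
      rw [Finset.sum_eq_single (⟨0, hk⟩ : Fin k) (fun i' _ hi' => ?_) (by simp)]
      · simpa [glinTarget, T0map, hc'] using hy d
      · refine Finset.sum_eq_zero fun j _ => ?_
        have hi'0 : (i' : ℕ) ≠ 0 := fun hcc => hi' (Fin.ext hcc)
        simp [T0map, hi'0]
    · refine Finset.sum_eq_zero fun i _ => Finset.sum_eq_zero fun j _ => ?_
      by_cases hi : (i : ℕ) = 0
      · have : ¬ (i = c) := fun hic => hc (hic ▸ hi)
        simp [glinTarget, T0map, this]
      · simp [T0map, hi]

end Aux8
section Aux8b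

set_option maxHeartbeats 1000000
set_option synthInstance.maxHeartbeats 400000

variable {F : Type*} [RCLike F]

lemma matRF_isUnit_det {a : Type*} [Fintype a] [DecidableEq a]
    {E : Matrix a a F[X]} (hE : IsUnit E.det) : IsUnit (matRF E).det := by
  have h1 : (matRF E).det = algebraMap F[X] (RatFunc F) E.det := by
    rw [RingHom.map_det]
    rfl
  rw [h1, isUnit_iff_ne_zero]
  intro hc
  have : E.det ≠ 0 := hE.ne_zero
  exact this (aMap_inj (by simpa using hc))

lemma mulVec_matRF_injective {a : Type*} [Fintype a] [DecidableEq a]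
    {E : Matrix a a F[X]} (hE : IsUnit E.det) :
    Function.Injective ((matRF E)ᵀ.mulVec) := by
  refine Matrix.mulVec_injective_iff_isUnit.mpr ?_
  have h2 : IsUnit (matRF E)ᵀ.det := by
    rw [Matrix.det_transpose]
    exact matRF_isUnit_det hE
  exact (Matrix.isUnit_iff_isUnit_det _).mpr h2

/-- Left null spaces under unimodular equivalence. -/
lemma Nl_unimodular {a c : Type*} [Fintype a] [DecidableEq a] [Fintype c]
    [DecidableEq c] (E : Matrix a a F[X]) (Lm : Matrix a c F[X]) (G : Matrix c c F[X])
    (hE : IsUnit E.det) (hG : IsUnit G.det) (T : Matrix a c F[X]) (h : E * Lm * G = T) :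
    Nl T = Submodule.comap ((matRF E)ᵀ.mulVecLin) (Nl Lm) := by
  ext z
  have hT : matRF T = matRF E * matRF Lm * matRF G := by
    rw [← h]
    simp only [matRF, Matrix.map_mul]
  rw [mem_Nl_iff', Submodule.mem_comap, Matrix.mulVecLin_apply, mem_Nl_iff', hT]
  have hGinj : Function.Injective ((matRF G)ᵀ.mulVec) := mulVec_matRF_injective hG
  have hassoc : (matRF E * matRF Lm * matRF G)ᵀ.mulVec z
      = (matRF G)ᵀ.mulVec ((matRF Lm)ᵀ.mulVec ((matRF E)ᵀ.mulVec z)) := by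
    rw [Matrix.mulVec_mulVec, Matrix.mulVec_mulVec, ← Matrix.transpose_mul,
      ← Matrix.transpose_mul, Matrix.mul_assoc]
  rw [hassoc]
  constructor
  · intro hz
    exact hGinj (hz.trans (Matrix.mulVec_zero _).symm)
  · intro hz
    rw [hz, Matrix.mulVec_zero]

lemma finrank_Nl {m r : ℕ} {ρ : Type*} [Fintype ρ] (P : Matrix (Fin m) ρ F[X])
    (hr : nrank P = r) :
    Module.finrank (RatFunc F) (Nl P) = m - r ∧ r ≤ m := by
  have h := LinearMap.finrank_range_add_finrank_ker ((matRF P)ᵀ.mulVecLin)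
  have hrk : Module.finrank (RatFunc F) (LinearMap.range ((matRF P)ᵀ.mulVecLin)) = r := by
    have h2 : ((matRF P)ᵀ).rank = (matRF P).rank := Matrix.rank_transpose _
    have h4 : ((matRF P)ᵀ).rank =
        Module.finrank (RatFunc F) (LinearMap.range ((matRF P)ᵀ.mulVecLin)) := rfl
    rw [← h4, h2, ← hr]
    rfl
  have hker : Nl P = LinearMap.ker ((matRF P)ᵀ.mulVecLin) := by
    rw [Nl, Nr, show matRF Pᵀ = (matRF P)ᵀ from Matrix.transpose_map]
  have hfin : Module.finrank (RatFunc F) (Fin m → RatFunc F) = m := by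
    simp [Module.finrank_pi]
  rw [hrk, hfin] at h
  constructor
  · rw [hker]; omega
  · omega

/-- The central structure lemma: `N_l(L) = Λ_k ⊗ N_l(P)` with the expected dimension. -/
lemma Nl_pencil_eq {k m n r : ℕ} (hk : 0 < k) (hmn : m ≤ n)
    (P : Matrix (Fin m) (Fin n) F[X]) (hr : nrank P = r)
    (L : Matrix (Fin k × Fin m) (Fin k × Fin n) F[X]) (w : Fin k → F)
    (hW : LeftAnsatz P L w) (hg : IsGLin P L) :
    Nl L = Submodule.map (Tmap F k m) (Nl P) ∧
      Module.finrank (RatFunc F) (Nl P) = m - r ∧ r ≤ m := by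
  obtain ⟨E, G, hE, hG, hEG⟩ := hg
  obtain ⟨hdimP, hrm⟩ := finrank_Nl P hr
  refine ⟨?_, hdimP, hrm⟩
  -- dimension of Nl (glinTarget P)
  have htarget : Nl (glinTarget (k := k) P) = Submodule.map (T0map F k m) (Nl P) :=
    Nl_glinTarget hk hmn P
  have hdimT : Module.finrank (RatFunc F) (Nl (glinTarget (k := k) P)) = m - r := by
    rw [htarget]
    rw [← LinearEquiv.finrank_eq (Submodule.equivMapOfInjective _ (T0map_injective hk) (Nl P))]
    exact hdimP
  -- dimension of Nl L via the unimodular equivalence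
  have hcomap : Nl (glinTarget (k := k) P) =
      Submodule.comap ((matRF E)ᵀ.mulVecLin) (Nl L) :=
    Nl_unimodular E L G hE hG _ hEG
  have hEinj : Function.Injective ((matRF E)ᵀ.mulVecLin) := by
    intro x y hxy
    exact mulVec_matRF_injective hE hxy
  have hdimL : Module.finrank (RatFunc F) (Nl L) = m - r := by
    let e : (Fin k × Fin m → RatFunc F) ≃ₗ[RatFunc F] (Fin k × Fin m → RatFunc F) :=
      LinearEquiv.ofInjectiveEndo ((matRF E)ᵀ.mulVecLin) hEinj
    have hco := Submodule.comap_equiv_eq_map_symm e (Nl L)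
    have hco2 : Submodule.comap ((matRF E)ᵀ.mulVecLin) (Nl L) =
        Submodule.comap (e : (Fin k × Fin m → RatFunc F) →ₗ[RatFunc F]
          (Fin k × Fin m → RatFunc F)) (Nl L) := rfl
    have h5 := hdimT
    rw [hcomap, hco2, hco, LinearEquiv.finrank_map_eq] at h5
    exact h5
  -- conclude
  have hle : Submodule.map (Tmap F k m) (Nl P) ≤ Nl L := map_Tmap_le_Nl P L w hW
  have hdmap : Module.finrank (RatFunc F)
      (Submodule.map (Tmap F k m) (Nl P)) = m - r := by
    rw [← LinearEquiv.finrank_eq (Submodule.equivMapOfInjective _ (Tmap_injective hk) (Nl P))]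
    exact hdimP
  exact (Submodule.eq_of_le_of_finrank_le hle (le_of_eq (hdimL.trans hdmap.symm))).symm

end Aux8b
section Aux8c

set_option maxHeartbeats 1000000
set_option synthInstance.maxHeartbeats 400000

variable {F : Type*} [RCLike F]

lemma le_polyVecDeg {γ : Type*} [Fintype γ] (x : γ → F[X]) (i : γ) :
    (x i).natDegree ≤ polyVecDeg x := by
  unfold polyVecDeg
  exact Finset.le_sup (f := fun j => (x j).natDegree) (Finset.mem_univ i)

lemma polyVecDeg_le {γ : Type*} [Fintype γ] {x : γ → F[X]} {d : ℕ}
    (h : ∀ i, (x i).natDegree ≤ d) : polyVecDeg x ≤ d := by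
  unfold polyVecDeg
  exact Finset.sup_le fun i _ => h i

/-- Degree of `Λ_k ⊗ y` for a nonzero vector polynomial `y`. -/
lemma polyVecDeg_tensor {k m : ℕ} (hk : 0 < k) (y : Fin m → F[X]) (hy : y ≠ 0) :
    polyVecDeg (fun p : Fin k × Fin m => X ^ (k - 1 - (p.1 : ℕ)) * y p.2) =
      (k - 1) + polyVecDeg y := by
  obtain ⟨j1, hj1⟩ : ∃ j, y j ≠ 0 := by
    by_contra hcon
    push_neg at hcon
    exact hy (funext fun j => hcon j)
  obtain ⟨j2, hj2ne, hj2deg⟩ : ∃ j, y j ≠ 0 ∧ (y j).natDegree = polyVecDeg y := by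
    obtain ⟨j0, -, hj0⟩ := Finset.exists_mem_eq_sup (Finset.univ : Finset (Fin m))
      ⟨j1, Finset.mem_univ j1⟩ (fun j => (y j).natDegree)
    by_cases h0 : y j0 = 0
    · refine ⟨j1, hj1, Nat.le_antisymm (le_polyVecDeg y j1) ?_⟩
      have h2 : polyVecDeg y = (y j0).natDegree := hj0
      rw [h2, h0, natDegree_zero]
      exact Nat.zero_le _
    · exact ⟨j0, h0, hj0.symm⟩
  apply le_antisymm
  · refine polyVecDeg_le fun p => ?_
    show (X ^ (k - 1 - (p.1 : ℕ)) * y p.2).natDegree ≤ (k - 1) + polyVecDeg y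
    by_cases hp : y p.2 = 0
    · rw [hp, mul_zero, natDegree_zero]
      exact Nat.zero_le _
    · rw [natDegree_mul (pow_ne_zero _ X_ne_zero) hp, natDegree_X_pow]
      have h1 : k - 1 - (p.1 : ℕ) ≤ k - 1 := Nat.sub_le _ _
      have h2 : (y p.2).natDegree ≤ polyVecDeg y := le_polyVecDeg y p.2
      omega
  · have hmem := le_polyVecDeg (fun p : Fin k × Fin m => X ^ (k - 1 - (p.1 : ℕ)) * y p.2)
      ((⟨0, hk⟩ : Fin k), j2)
    have h3 : ((fun p : Fin k × Fin m => X ^ (k - 1 - (p.1 : ℕ)) * y p.2)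
        ((⟨0, hk⟩ : Fin k), j2)).natDegree = (k - 1) + polyVecDeg y := by
      show (X ^ (k - 1 - ((⟨0, hk⟩ : Fin k) : ℕ)) * y j2).natDegree = _
      rw [natDegree_mul (pow_ne_zero _ X_ne_zero) hj2ne, natDegree_X_pow, hj2deg]
      simp
    rw [h3] at hmem
    exact hmem

lemma isPolyBasis_ne_zero {γ ι : Type*} [Fintype γ]
    {V : Submodule (RatFunc F) (γ → RatFunc F)} {b : ι → γ → F[X]}
    (hb : IsPolyBasis V b) (i : ι) : b i ≠ 0 := by
  intro hc
  have := hb.1.ne_zero i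
  rw [hc, polyVec_zero] at this
  exact this rfl

lemma isPolyBasis_card {γ : Type*} [Fintype γ] {d : ℕ}
    {V : Submodule (RatFunc F) (γ → RatFunc F)} {b : Fin d → γ → F[X]}
    (hb : IsPolyBasis V b) : d = Module.finrank (RatFunc F) V := by
  have h := finrank_span_eq_card (R := RatFunc F) hb.1
  rw [hb.2] at h
  simpa using h.symm

section Transfer

variable {k m n : ℕ}
variable (P : Matrix (Fin m) (Fin n) F[X]) (L : Matrix (Fin k × Fin m) (Fin k × Fin n) F[X])

/-- tensoring a polynomial basis of `N_l(P)` gives one of `N_l(L)`. -/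
lemma isPolyBasis_tensor (hNl : Nl L = Submodule.map (Tmap F k m) (Nl P)) (hk : 0 < k)
    {d : ℕ} (b : Fin d → Fin m → F[X]) (hb : IsPolyBasis (Nl P) b) :
    IsPolyBasis (Nl L)
      (fun i => fun p : Fin k × Fin m => X ^ (k - 1 - (p.1 : ℕ)) * b i p.2) := by
  have hcomp : (fun i => polyVec (fun p : Fin k × Fin m => X ^ (k - 1 - (p.1 : ℕ)) * b i p.2))
      = ⇑(Tmap F k m) ∘ (fun i => polyVec (b i)) := by
    funext i
    exact (Tmap_polyVec (b i)).symm
  constructor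
  · rw [hcomp]
    exact hb.1.map' (Tmap F k m) (LinearMap.ker_eq_bot.mpr (Tmap_injective hk))
  · rw [hcomp, Set.range_comp, ← Submodule.map_span, hb.2, hNl]

/-- every polynomial basis of `N_l(L)` is obtained by tensoring one of `N_l(P)`. -/
lemma isPolyBasis_untensor (hNl : Nl L = Submodule.map (Tmap F k m) (Nl P)) (hk : 0 < k)
    {d : ℕ} (b : Fin d → Fin k × Fin m → F[X]) (hb : IsPolyBasis (Nl L) b) :
    ∃ y : Fin d → Fin m → F[X],
      (∀ i, b i = fun p : Fin k × Fin m => X ^ (k - 1 - (p.1 : ℕ)) * y i p.2) ∧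
        IsPolyBasis (Nl P) y := by
  have hmem : ∀ i, polyVec (b i) ∈ Nl L := by
    intro i
    rw [← hb.2]
    exact Submodule.subset_span ⟨i, rfl⟩
  have hdecomp : ∀ i, ∃ y : Fin m → F[X],
      (b i = fun p : Fin k × Fin m => X ^ (k - 1 - (p.1 : ℕ)) * y p.2) ∧
        polyVec y ∈ Nl P ∧ Tmap F k m (polyVec y) = polyVec (b i) := by
    intro i
    have h := hmem i
    rw [hNl] at h
    obtain ⟨y', hy', hTy'⟩ := Submodule.mem_map.mp h
    set y : Fin m → F[X] := fun j => b i (⟨k - 1, by omega⟩, j) with hydef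
    have hy'eq : y' = polyVec y := by
      funext j
      have h2 := congrFun hTy' (⟨k - 1, by omega⟩, j)
      rw [Tmap_apply] at h2
      simpa [Nat.sub_self, polyVec, hydef] using h2
    have hTpoly : Tmap F k m (polyVec y) = polyVec (b i) := hy'eq ▸ hTy'
    refine ⟨y, ?_, hy'eq ▸ hy', hTpoly⟩
    funext p
    refine aMap_inj ?_
    have h3 := congrFun hTpoly p
    have h4 := congrFun (Tmap_polyVec (F := F) (k := k) y) p
    exact h3.symm.trans h4
  choose y hy hymem hTy using hdecomp
  have hcomp : ⇑(Tmap F k m) ∘ (fun i => polyVec (y i)) = fun i => polyVec (b i) :=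
    funext fun i => hTy i
  refine ⟨y, hy, ?_, ?_⟩
  · apply LinearIndependent.of_comp (Tmap F k m)
    rw [hcomp]
    exact hb.1
  · have hspan : Submodule.map (Tmap F k m)
        (Submodule.span (RatFunc F) (Set.range fun i => polyVec (y i))) =
        Submodule.map (Tmap F k m) (Nl P) := by
      rw [Submodule.map_span, ← Set.range_comp, hcomp, hb.2, hNl]
    exact Submodule.map_injective_of_injective (Tmap_injective hk) hspan

end Transfer

end Aux8c
section Aux8d

set_option maxHeartbeats 1000000
set_option synthInstance.maxHeartbeats 400000

variable {F : Type*} [RCLike F]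

private lemma sum_const_add {d c : ℕ} (f : Fin d → ℕ) :
    ∑ i, (c + f i) = d * c + ∑ i, f i := by
  rw [Finset.sum_add_distrib, Finset.sum_const, Finset.card_univ, Fintype.card_fin,
    smul_eq_mul]

variable {k m n : ℕ}
variable (P : Matrix (Fin m) (Fin n) F[X]) (L : Matrix (Fin k × Fin m) (Fin k × Fin n) F[X])

lemma isMinimalBasis_tensor (hNl : Nl L = Submodule.map (Tmap F k m) (Nl P)) (hk : 0 < k)
    {e : ℕ} (b : Fin e → Fin m → F[X]) (hb : IsMinimalBasis (Nl P) b) :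
    IsMinimalBasis (Nl L)
      (fun i => fun p : Fin k × Fin m => X ^ (k - 1 - (p.1 : ℕ)) * b i p.2) := by
  refine ⟨isPolyBasis_tensor P L hNl hk b hb.1, ?_⟩
  intro d b' hb'
  obtain ⟨y', hy', hyb⟩ := isPolyBasis_untensor P L hNl hk b' hb'
  have hde : d = e := by
    rw [isPolyBasis_card hyb, ← isPolyBasis_card hb.1]
  subst hde
  show (∑ i : Fin d, polyVecDeg
      (fun p : Fin k × Fin m => X ^ (k - 1 - (p.1 : ℕ)) * b i p.2)) ≤
    ∑ i, polyVecDeg (b' i)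
  have h1 : ∑ i, polyVecDeg (fun p : Fin k × Fin m => X ^ (k - 1 - (p.1 : ℕ)) * b i p.2)
      = d * (k - 1) + ∑ i, polyVecDeg (b i) := by
    rw [Finset.sum_congr rfl fun i _ =>
      polyVecDeg_tensor hk (b i) (isPolyBasis_ne_zero hb.1 i), sum_const_add]
  have h2 : ∑ i, polyVecDeg (b' i) = d * (k - 1) + ∑ i, polyVecDeg (y' i) := by
    rw [Finset.sum_congr rfl fun i _ => ?_, sum_const_add]
    rw [hy' i]
    exact polyVecDeg_tensor hk (y' i) (isPolyBasis_ne_zero hyb i)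
  have h3 : ∑ i, polyVecDeg (b i) ≤ ∑ i, polyVecDeg (y' i) := hb.2 d y' hyb
  omega

lemma isMinimalBasis_untensor (hNl : Nl L = Submodule.map (Tmap F k m) (Nl P)) (hk : 0 < k)
    {e : ℕ} (b : Fin e → Fin k × Fin m → F[X]) (hb : IsMinimalBasis (Nl L) b) :
    ∃ y : Fin e → Fin m → F[X],
      (∀ i, b i = fun p : Fin k × Fin m => X ^ (k - 1 - (p.1 : ℕ)) * y i p.2) ∧
        IsMinimalBasis (Nl P) y ∧ ∀ i, polyVecDeg (b i) = (k - 1) + polyVecDeg (y i) := by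
  obtain ⟨y, hy, hyb⟩ := isPolyBasis_untensor P L hNl hk b hb.1
  have hdeg : ∀ i, polyVecDeg (b i) = (k - 1) + polyVecDeg (y i) := by
    intro i
    rw [hy i]
    exact polyVecDeg_tensor hk _ (isPolyBasis_ne_zero hyb i)
  refine ⟨y, hy, ⟨hyb, ?_⟩, hdeg⟩
  intro d c hc
  have hde : d = e := by
    rw [isPolyBasis_card hc, ← isPolyBasis_card hyb]
  subst hde
  have hTc := isPolyBasis_tensor P L hNl hk c hc
  have hmin := hb.2 d _ hTc
  have h1 : ∑ i, polyVecDeg (b i) = d * (k - 1) + ∑ i, polyVecDeg (y i) := by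
    rw [Finset.sum_congr rfl fun i _ => hdeg i, sum_const_add]
  have h2 : ∑ i, polyVecDeg (fun p : Fin k × Fin m => X ^ (k - 1 - (p.1 : ℕ)) * c i p.2)
      = d * (k - 1) + ∑ i, polyVecDeg (c i) := by
    rw [Finset.sum_congr rfl fun i _ =>
      polyVecDeg_tensor hk (c i) (isPolyBasis_ne_zero hc i), sum_const_add]
  omega

end Aux8d
set_option maxHeartbeats 1000000 in
set_option synthInstance.maxHeartbeats 400000 in

/-- For `m ≤ n`, `nrank P = r` and a g-linearization `L ∈ 𝕃₂(P)` of `P`: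
(1) the left minimal indices of `P` are `ε₁ ≤ … ≤ ε_{m−r}` iff those of `L` are
`(k−1)+ε₁ ≤ … ≤ (k−1)+ε_{m−r}`; (2) every left minimal basis of `L` is
`{Λ_k(λ) ⊗ y_i(λ)}` for a left minimal basis `{y_i(λ)}` of `P`. -/
theorem statement_8 {F : Type*} [RCLike F] {k m n : ℕ} (hk : 0 < k) (hmn : m ≤ n)
    (r : ℕ) (A : Fin (k + 1) → Matrix (Fin m) (Fin n) F)
    (hr : nrank (matPoly A) = r)
    (Xc Yc : Matrix (Fin k × Fin m) (Fin k × Fin n) F)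
    (hmem : ∃ w : Fin k → F, LeftAnsatz (matPoly A) (pencil Xc Yc) w)
    (hg : IsGLin (matPoly A) (pencil Xc Yc)) :
    (∀ ε : Fin (m - r) → ℕ, Monotone ε →
      (HasMinIndices (Nl (matPoly A)) ε ↔
        HasMinIndices (Nl (pencil Xc Yc)) fun i => (k - 1) + ε i)) ∧
    (∀ b : Fin (m - r) → (Fin k × Fin m → F[X]),
      IsMinimalBasis (Nl (pencil Xc Yc)) b →
        ∃ y : Fin (m - r) → (Fin m → F[X]),
          IsMinimalBasis (Nl (matPoly A)) y ∧
            ∀ i, b i = fun p => Polynomial.X ^ (k - 1 - (p.1 : ℕ)) * y i p.2) := by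
  obtain ⟨w, hW⟩ := hmem
  obtain ⟨hNl, hdimP, hrm⟩ :=
    Nl_pencil_eq hk hmn (matPoly A) hr (pencil Xc Yc) w hW hg
  constructor
  · intro ε _hmono
    constructor
    · rintro ⟨b, hb, hdeg⟩
      refine ⟨fun i => fun p : Fin k × Fin m => X ^ (k - 1 - (p.1 : ℕ)) * b i p.2,
        isMinimalBasis_tensor _ _ hNl hk b hb, fun i => ?_⟩
      rw [polyVecDeg_tensor hk _ (isPolyBasis_ne_zero hb.1 i), hdeg i]
    · rintro ⟨b, hb, hdeg⟩
      obtain ⟨y, hy, hymin, hydeg⟩ := isMinimalBasis_untensor _ _ hNl hk b hb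
      refine ⟨y, hymin, fun i => ?_⟩
      have h5 := (hdeg i).symm.trans (hydeg i)
      simp only at h5
      omega
  · intro b hb
    obtain ⟨y, hy, hymin, hydeg⟩ := isMinimalBasis_untensor _ _ hNl hk b hb
    exact ⟨y, hymin, hy⟩
end GLin
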